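/- Let A and B be rings, ${}_AP_B$ and ${}_BQ_A$ bimodules, and ν: P ⊗_B Q → A an A-A-bimodule homomorphism. If the functor P ⊗_B − from left B-modules to left A-modules is left adjoint to Q ⊗_A − with counit of adjunction (at A, under the identification A ⊗_A M ≅ M) given by ν, then there exists an element Σᵢ q'ᵢ ⊗ p'ᵢ ∈ Q ⊗_A P such that Σᵢ ν(p ⊗ q'ᵢ)·p'ᵢ = p for all p ∈ P and Σᵢ q'ᵢ·ν(p'ᵢ ⊗ q) = q for all q ∈ Q. -/

import Mathlib

/-! ### A balanced tensor product of a right module and a left module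
over a possibly noncommutative ring, constructed as a quotient of the
`ℤ`-tensor product. -/

open MulOpposite
open scoped TensorProduct

section BalCore

variable (R : Type*) [Ring R] (M : Type*) [AddCommGroup M] [Module Rᵐᵒᵖ M]
  (N : Type*) [AddCommGroup N] [Module R N]

/-- The subgroup of relations defining the balanced tensor product. -/
def balRel : Submodule ℤ (TensorProduct ℤ M N) :=
  Submodule.span ℤ {x | ∃ (m : M) (r : R) (n : N), x = (op r • m) ⊗ₜ[ℤ] n - m ⊗ₜ[ℤ] (r • n)}

/-- The balanced tensor product `M ⊗[R] N` of a right `R`-module `M` and a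
left `R`-module `N`. -/
def Bal : Type _ := TensorProduct ℤ M N ⧸ balRel R M N

noncomputable instance : AddCommGroup (Bal R M N) := Submodule.Quotient.addCommGroup _

variable {M N}

/-- The canonical image of `m ⊗ n` in the balanced tensor product. -/
noncomputable def Bal.tmul (m : M) (n : N) : Bal R M N := Submodule.Quotient.mk (m ⊗ₜ[ℤ] n)

theorem Bal.add_tmul (m m' : M) (n : N) :
    Bal.tmul R (m + m') n = Bal.tmul R m n + Bal.tmul R m' n := by
  show Submodule.Quotient.mk _ = _
  rw [TensorProduct.add_tmul]
  rfl

theorem Bal.tmul_add (m : M) (n n' : N) :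
    Bal.tmul R m (n + n') = Bal.tmul R m n + Bal.tmul R m n' := by
  show Submodule.Quotient.mk _ = _
  rw [TensorProduct.tmul_add]
  rfl

theorem Bal.zero_tmul (n : N) : Bal.tmul R (0 : M) n = 0 := by
  show Submodule.Quotient.mk _ = _
  rw [TensorProduct.zero_tmul]
  rfl

theorem Bal.tmul_zero (m : M) : Bal.tmul R m (0 : N) = 0 := by
  show Submodule.Quotient.mk _ = _
  rw [TensorProduct.tmul_zero]
  rfl

/-- The fundamental balancing relation `(m · r) ⊗ n = m ⊗ (r · n)`. -/
theorem Bal.op_smul_tmul (m : M) (r : R) (n : N) :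
    Bal.tmul R (op r • m) n = Bal.tmul R m (r • n) :=
  (Submodule.Quotient.eq _).2 (Submodule.subset_span ⟨m, r, n, rfl⟩)

theorem Bal.induction_on {C : Bal R M N → Prop} (x : Bal R M N) (zero : C 0)
    (tmul : ∀ m n, C (Bal.tmul R m n)) (add : ∀ x y, C x → C y → C (x + y)) : C x := by
  obtain ⟨y, rfl⟩ := Submodule.Quotient.mk_surjective _ x
  induction y using TensorProduct.induction_on with
  | zero => exact zero
  | tmul m n => exact tmul m n
  | add a b ha hb =>
      have : (Submodule.Quotient.mk (a + b) : Bal R M N)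
          = Submodule.Quotient.mk a + Submodule.Quotient.mk b := rfl
      rw [this]; exact add _ _ ha hb

/-- Lift a balanced biadditive map to the balanced tensor product. -/
noncomputable def Bal.liftFun {T : Type*} [AddCommGroup T] (f : M → N → T)
    (h1 : ∀ m m' n, f (m + m') n = f m n + f m' n)
    (h2 : ∀ m n n', f m (n + n') = f m n + f m n')
    (h3 : ∀ (m : M) (r : R) (n : N), f (op r • m) n = f m (r • n)) : Bal R M N →+ T :=
  letI f₂ : M →+ N →+ T :=
    AddMonoidHom.mk' (fun m => AddMonoidHom.mk' (f m) (h2 m))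
      (fun m m' => AddMonoidHom.ext fun n => h1 m m' n)
  letI bil : M →ₗ[ℤ] N →ₗ[ℤ] T :=
    { toFun := fun m => (f₂ m).toIntLinearMap
      map_add' := fun m m' => LinearMap.ext fun n => by simp
      map_smul' := fun z m => LinearMap.ext fun n => by
        simp [map_zsmul] }
  ((balRel R M N).liftQ (TensorProduct.lift bil) (by
    rw [balRel, Submodule.span_le]
    rintro x ⟨m, r, n, rfl⟩
    show TensorProduct.lift bil _ = 0
    rw [map_sub, TensorProduct.lift.tmul, TensorProduct.lift.tmul]
    simp [bil, f₂, h3 m r n])).toAddMonoidHom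

@[simp] theorem Bal.liftFun_tmul {T : Type*} [AddCommGroup T] (f : M → N → T)
    (h1 : ∀ m m' n, f (m + m') n = f m n + f m' n)
    (h2 : ∀ m n n', f m (n + n') = f m n + f m n')
    (h3 : ∀ (m : M) (r : R) (n : N), f (op r • m) n = f m (r • n)) (m : M) (n : N) :
    Bal.liftFun R f h1 h2 h3 (Bal.tmul R m n) = f m n := by
  simp [Bal.liftFun, Bal.tmul, Submodule.Quotient.mk]
  rfl

theorem Bal.addHom_ext {T : Type*} [AddCommGroup T] {f g : Bal R M N →+ T}
    (h : ∀ m n, f (Bal.tmul R m n) = g (Bal.tmul R m n)) : f = g := by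
  ext x
  refine Bal.induction_on R (C := fun z => f z = g z) x (by simp) h
    (fun x y hx hy => by simp only [map_add]; rw [hx, hy])

end BalCore
section BalModule

variable (R : Type*) [Ring R] {M : Type*} [AddCommGroup M] [Module Rᵐᵒᵖ M]
  {N : Type*} [AddCommGroup N] [Module R N]

section Left

variable {S : Type*} [Ring S] [Module S M] [SMulCommClass S Rᵐᵒᵖ M]

/-- The left action on the balanced tensor product through the first factor. -/
noncomputable def Bal.lsmulHom (s : S) : Bal R M N →+ Bal R M N :=
  Bal.liftFun R (fun m n => Bal.tmul R (s • m) n)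
    (fun m m' n => by
      show Bal.tmul R (s • (m + m')) n = Bal.tmul R (s • m) n + Bal.tmul R (s • m') n
      rw [smul_add, Bal.add_tmul])
    (fun m n n' => Bal.tmul_add R _ n n')
    (fun m r n => by
      show Bal.tmul R (s • op r • m) n = Bal.tmul R (s • m) (r • n)
      rw [smul_comm, Bal.op_smul_tmul])

theorem Bal.lsmulHom_tmul (s : S) (m : M) (n : N) :
    Bal.lsmulHom R (M := M) (N := N) s (Bal.tmul R m n) = Bal.tmul R (s • m) n :=
  Bal.liftFun_tmul R _ _ _ _ m n

noncomputable instance : SMul S (Bal R M N) := ⟨fun s x => Bal.lsmulHom R s x⟩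

theorem Bal.lsmul_tmul (s : S) (m : M) (n : N) :
    s • Bal.tmul R m n = Bal.tmul R (s • m) n :=
  Bal.lsmulHom_tmul R s m n

theorem Bal.lsmul_one : Bal.lsmulHom R (M := M) (N := N) (1 : S) = AddMonoidHom.id _ :=
  Bal.addHom_ext R fun m n => by
    rw [Bal.lsmulHom_tmul, one_smul, AddMonoidHom.id_apply]

theorem Bal.lsmul_mul (s t : S) :
    Bal.lsmulHom R (M := M) (N := N) (s * t) = (Bal.lsmulHom R s).comp (Bal.lsmulHom R t) :=
  Bal.addHom_ext R fun m n => by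
    rw [AddMonoidHom.comp_apply, Bal.lsmulHom_tmul, Bal.lsmulHom_tmul, Bal.lsmulHom_tmul,
      mul_smul]

theorem Bal.lsmul_addsmul (s t : S) :
    Bal.lsmulHom R (M := M) (N := N) (s + t) = Bal.lsmulHom R s + Bal.lsmulHom R t :=
  Bal.addHom_ext R fun m n => by
    rw [AddMonoidHom.add_apply, Bal.lsmulHom_tmul, Bal.lsmulHom_tmul, Bal.lsmulHom_tmul,
      add_smul, Bal.add_tmul]

theorem Bal.lsmul_zerosmul : Bal.lsmulHom R (M := M) (N := N) (0 : S) = 0 :=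
  Bal.addHom_ext R fun m n => by
    rw [Bal.lsmulHom_tmul, zero_smul, Bal.zero_tmul, AddMonoidHom.zero_apply]

noncomputable instance : Module S (Bal R M N) where
  one_smul x := DFunLike.congr_fun (Bal.lsmul_one R (M := M) (N := N) (S := S)) x
  mul_smul s t x := DFunLike.congr_fun (Bal.lsmul_mul R s t) x
  smul_zero s := (Bal.lsmulHom R (M := M) (N := N) s).map_zero
  smul_add s x y := (Bal.lsmulHom R s).map_add x y
  add_smul s t x := DFunLike.congr_fun (Bal.lsmul_addsmul R s t) x
  zero_smul x := DFunLike.congr_fun (Bal.lsmul_zerosmul R (M := M) (N := N) (S := S)) x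

end Left

section Right

variable {S : Type*} [Ring S] [Module Sᵐᵒᵖ N] [SMulCommClass R Sᵐᵒᵖ N]

/-- The right action on the balanced tensor product through the second factor. -/
noncomputable def Bal.rsmulHom (s : Sᵐᵒᵖ) : Bal R M N →+ Bal R M N :=
  Bal.liftFun R (fun m n => Bal.tmul R m (s • n))
    (fun m m' n => Bal.add_tmul R m m' _)
    (fun m n n' => by
      show Bal.tmul R m (s • (n + n')) = Bal.tmul R m (s • n) + Bal.tmul R m (s • n')
      rw [smul_add, Bal.tmul_add])
    (fun m r n => by
      show Bal.tmul R (op r • m) (s • n) = Bal.tmul R m (s • r • n)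
      rw [Bal.op_smul_tmul, smul_comm])

theorem Bal.rsmulHom_tmul (s : Sᵐᵒᵖ) (m : M) (n : N) :
    Bal.rsmulHom R (M := M) (N := N) s (Bal.tmul R m n) = Bal.tmul R m (s • n) :=
  Bal.liftFun_tmul R _ _ _ _ m n

noncomputable instance : SMul Sᵐᵒᵖ (Bal R M N) := ⟨fun s x => Bal.rsmulHom R s x⟩

theorem Bal.rsmul_tmul (s : Sᵐᵒᵖ) (m : M) (n : N) :
    s • Bal.tmul R m n = Bal.tmul R m (s • n) :=
  Bal.rsmulHom_tmul R s m n

theorem Bal.rsmul_one : Bal.rsmulHom R (M := M) (N := N) (1 : Sᵐᵒᵖ) = AddMonoidHom.id _ :=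
  Bal.addHom_ext R fun m n => by
    rw [Bal.rsmulHom_tmul, one_smul, AddMonoidHom.id_apply]

theorem Bal.rsmul_mul (s t : Sᵐᵒᵖ) :
    Bal.rsmulHom R (M := M) (N := N) (s * t) = (Bal.rsmulHom R s).comp (Bal.rsmulHom R t) :=
  Bal.addHom_ext R fun m n => by
    rw [AddMonoidHom.comp_apply, Bal.rsmulHom_tmul, Bal.rsmulHom_tmul, Bal.rsmulHom_tmul,
      mul_smul]

theorem Bal.rsmul_addsmul (s t : Sᵐᵒᵖ) :
    Bal.rsmulHom R (M := M) (N := N) (s + t) = Bal.rsmulHom R s + Bal.rsmulHom R t :=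
  Bal.addHom_ext R fun m n => by
    rw [AddMonoidHom.add_apply, Bal.rsmulHom_tmul, Bal.rsmulHom_tmul, Bal.rsmulHom_tmul,
      add_smul, Bal.tmul_add]

theorem Bal.rsmul_zerosmul : Bal.rsmulHom R (M := M) (N := N) (0 : Sᵐᵒᵖ) = 0 :=
  Bal.addHom_ext R fun m n => by
    rw [Bal.rsmulHom_tmul, zero_smul, Bal.tmul_zero, AddMonoidHom.zero_apply]

noncomputable instance : Module Sᵐᵒᵖ (Bal R M N) where
  one_smul x := DFunLike.congr_fun (Bal.rsmul_one R (M := M) (N := N) (S := S)) x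
  mul_smul s t x := DFunLike.congr_fun (Bal.rsmul_mul R s t) x
  smul_zero s := (Bal.rsmulHom R (M := M) (N := N) s).map_zero
  smul_add s x y := (Bal.rsmulHom R s).map_add x y
  add_smul s t x := DFunLike.congr_fun (Bal.rsmul_addsmul R s t) x
  zero_smul x := DFunLike.congr_fun (Bal.rsmul_zerosmul R (M := M) (N := N) (S := S)) x

end Right

end BalModule
section MapRight

variable (R : Type*) [Ring R] {M : Type*} [AddCommGroup M] [Module Rᵐᵒᵖ M]
  {N N' N'' : Type*} [AddCommGroup N] [Module R N] [AddCommGroup N'] [Module R N']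
  [AddCommGroup N''] [Module R N'']

/-- Functoriality of the balanced tensor product in the second variable. -/
noncomputable def Bal.mapRightHom (f : N →ₗ[R] N') : Bal R M N →+ Bal R M N' :=
  Bal.liftFun R (fun m n => Bal.tmul R m (f n))
    (fun m m' n => Bal.add_tmul R m m' _)
    (fun m n n' => by
      show Bal.tmul R m (f (n + n')) = Bal.tmul R m (f n) + Bal.tmul R m (f n')
      rw [map_add, Bal.tmul_add])
    (fun m r n => by
      show Bal.tmul R (op r • m) (f n) = Bal.tmul R m (f (r • n))
      rw [Bal.op_smul_tmul, map_smul])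

@[simp] theorem Bal.mapRightHom_tmul (f : N →ₗ[R] N') (m : M) (n : N) :
    Bal.mapRightHom R (M := M) f (Bal.tmul R m n) = Bal.tmul R m (f n) := rfl

theorem Bal.mapRightHom_id :
    Bal.mapRightHom R (M := M) (LinearMap.id : N →ₗ[R] N) = AddMonoidHom.id _ :=
  Bal.addHom_ext R fun m n => by rw [Bal.mapRightHom_tmul, AddMonoidHom.id_apply]; rfl

theorem Bal.mapRightHom_comp (f : N →ₗ[R] N') (g : N' →ₗ[R] N'') :
    Bal.mapRightHom R (M := M) (g.comp f)
      = (Bal.mapRightHom R g).comp (Bal.mapRightHom R f) :=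
  Bal.addHom_ext R fun m n => by
    rw [AddMonoidHom.comp_apply, Bal.mapRightHom_tmul, Bal.mapRightHom_tmul,
      Bal.mapRightHom_tmul]
    rfl

variable {S : Type*} [Ring S] [Module S M] [SMulCommClass S Rᵐᵒᵖ M]

theorem Bal.mapRightHom_lsmul_comm (f : N →ₗ[R] N') (s : S) :
    (Bal.mapRightHom R (M := M) f).comp (Bal.lsmulHom R s)
      = (Bal.lsmulHom R s).comp (Bal.mapRightHom R f) :=
  Bal.addHom_ext R fun m n => by
    rw [AddMonoidHom.comp_apply, AddMonoidHom.comp_apply, Bal.lsmulHom_tmul,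
      Bal.mapRightHom_tmul, Bal.mapRightHom_tmul, Bal.lsmulHom_tmul]

/-- Functoriality of the balanced tensor product in the second variable, as a
left `S`-linear map. -/
noncomputable def Bal.mapRight (f : N →ₗ[R] N') : Bal R M N →ₗ[S] Bal R M N' where
  toFun := Bal.mapRightHom R f
  map_add' := map_add _
  map_smul' s x := DFunLike.congr_fun (Bal.mapRightHom_lsmul_comm R f s) x

@[simp] theorem Bal.mapRight_tmul (f : N →ₗ[R] N') (m : M) (n : N) :
    Bal.mapRight R (S := S) f (Bal.tmul R m n) = Bal.tmul R m (f n) := rfl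

end MapRight

universe u

open CategoryTheory

/-- The tensor functor `X ⊗[R] - : R-Mod ⥤ S-Mod` associated to an `(S,R)`-bimodule `X`. -/
noncomputable def tensorFunctor (R S : Type u) [Ring R] [Ring S] (X : Type u)
    [AddCommGroup X] [Module S X] [Module Rᵐᵒᵖ X] [SMulCommClass S Rᵐᵒᵖ X] :
    ModuleCat.{u} R ⥤ ModuleCat.{u} S where
  obj M := ModuleCat.of S (Bal R X M)
  map {M M'} f := ModuleCat.ofHom (Bal.mapRight R f.hom)
  map_id M := ModuleCat.hom_ext (LinearMap.ext fun x =>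
    DFunLike.congr_fun (Bal.mapRightHom_id R (M := X) (N := M)) x)
  map_comp {M M' M''} f g := ModuleCat.hom_ext (LinearMap.ext fun x =>
    DFunLike.congr_fun (Bal.mapRightHom_comp R (M := X) f.hom g.hom) x)

@[simp] theorem tensorFunctor_map_tmul (R S : Type u) [Ring R] [Ring S] (X : Type u)
    [AddCommGroup X] [Module S X] [Module Rᵐᵒᵖ X] [SMulCommClass S Rᵐᵒᵖ X]
    {M M' : ModuleCat.{u} R} (f : M ⟶ M') (x : X) (n : M) :
    (tensorFunctor R S X).map f (Bal.tmul R x n) = Bal.tmul R x (f n) := rfl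

/-- A functor is a separable functor if it has a right adjoint such that the unit of the
adjunction admits a natural retraction. -/
def IsSeparableFunctor {C D : Type*} [Category C] [Category D] (F : C ⥤ D) : Prop :=
  ∃ (G : D ⥤ C) (adj : F ⊣ G) (r : F ⋙ G ⟶ 𝟭 C), adj.unit ≫ r = 𝟙 (𝟭 C)

/-! The adjunction element is the image of `1` under the unit `B → Q ⊗[A] (P ⊗[B] B)`.
By naturality along `a ↦ a • m`, the counit at any `A`-module `M` is determined by `ν`:
it sends `p ⊗ (q ⊗ m)` to `ν (p ⊗ q) • m`. The two identities are then the triangle identities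
of the adjunction, evaluated at `p ⊗ 1 ∈ P ⊗[B] B` and at `q ⊗ 1 ∈ Q ⊗[A] A`. -/

namespace Bal

variable (R : Type*) [Ring R] {M : Type*} [AddCommGroup M] [Module Rᵐᵒᵖ M]
  {N : Type*} [AddCommGroup N] [Module R N]

theorem tmul_sum {ι : Type*} (s : Finset ι) (m : M) (f : ι → N) :
    tmul R m (∑ i ∈ s, f i) = ∑ i ∈ s, tmul R m (f i) :=
  map_sum (AddMonoidHom.mk' (tmul R m) (tmul_add R m)) f s

theorem exists_eq_sum_tmul (x : Bal R M N) :
    ∃ (n : ℕ) (m : Fin n → M) (k : Fin n → N), x = ∑ i, tmul R (m i) (k i) := by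
  induction x using induction_on R with
  | zero => exact ⟨0, ![], ![], by simp⟩
  | tmul m k => exact ⟨1, ![m], ![k], by simp⟩
  | add x y hx hy =>
    obtain ⟨n, m, k, rfl⟩ := hx
    obtain ⟨n', m', k', rfl⟩ := hy
    exact ⟨n + n', Fin.append m m', Fin.append k k', by simp [Fin.sum_univ_add]⟩

noncomputable def contractRight : Bal R M R →+ M :=
  liftFun R (fun m r => op r • m)
    (fun _ _ _ => smul_add _ _ _)
    (fun m r r' => by
      show op (r + r') • m = op r • m + op r' • m
      rw [MulOpposite.op_add, add_smul])
    (fun m r r' => by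
      show op r' • op r • m = op (r • r') • m
      rw [smul_eq_mul, op_mul, mul_smul])

@[simp] theorem contractRight_tmul (m : M) (r : R) :
    contractRight R (tmul R m r) = op r • m :=
  liftFun_tmul R _ _ _ _ m r

theorem tmul_contractRight_one (x : Bal R M R) :
    tmul R (contractRight R x) (1 : R) = x := by
  induction x using induction_on R with
  | zero => rw [map_zero, zero_tmul]
  | tmul m r => rw [contractRight_tmul, op_smul_tmul, smul_eq_mul, mul_one]
  | add x y hx hy => rw [map_add, add_tmul, hx, hy]

theorem exists_eq_sum_tmul_tmul_one {S : Type*} [Ring S] {P : Type*} [AddCommGroup P]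
    [Module S P] [Module Rᵐᵒᵖ P] [SMulCommClass S Rᵐᵒᵖ P] {Q : Type*} [AddCommGroup Q]
    [Module Sᵐᵒᵖ Q] (y : Bal S Q (Bal R P R)) :
    ∃ (n : ℕ) (q : Fin n → Q) (p : Fin n → P),
      y = ∑ i, tmul S (q i) (tmul R (p i) (1 : R)) := by
  obtain ⟨n, q, x, rfl⟩ := exists_eq_sum_tmul S y
  exact ⟨n, q, fun i => contractRight R (x i), by simp only [tmul_contractRight_one]⟩

end Bal

namespace CategoryTheory.NatTrans

variable {R : Type u} [Ring R]

theorem app_eq_map_toSpanSingleton {H : ModuleCat.{u} R ⥤ ModuleCat.{u} R}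
    (η : 𝟭 _ ⟶ H) (N : ModuleCat.{u} R) (n : N) :
    η.app N n = H.map (ModuleCat.ofHom (LinearMap.toSpanSingleton R N n))
      (η.app (ModuleCat.of R R) (1 : R)) := by
  have := ConcreteCategory.congr_hom
    (η.naturality (ModuleCat.ofHom (LinearMap.toSpanSingleton R N n))) (1 : R)
  simp only [Functor.id_obj, Functor.id_map, ConcreteCategory.comp_apply] at this
  rw [← this]
  simp

theorem app_map_toSpanSingleton {H : ModuleCat.{u} R ⥤ ModuleCat.{u} R}
    (ε : H ⟶ 𝟭 _) (M : ModuleCat.{u} R) (m : M) (y : H.obj (ModuleCat.of R R)) :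
    ε.app M (H.map (ModuleCat.ofHom (LinearMap.toSpanSingleton R M m)) y)
      = ε.app (ModuleCat.of R R) y • m := by
  simp

end CategoryTheory.NatTrans

section Adjunction

variable {A B P Q : Type u} [Ring A] [Ring B]
  [AddCommGroup P] [Module A P] [Module Bᵐᵒᵖ P] [SMulCommClass A Bᵐᵒᵖ P]
  [AddCommGroup Q] [Module B Q] [Module Aᵐᵒᵖ Q] [SMulCommClass B Aᵐᵒᵖ Q]
  {ν : Bal B P Q →+ A} {adj : tensorFunctor B A P ⊣ tensorFunctor A B Q}

theorem counit_app_tmul_tmul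
    (hcounit : ∀ (p : P) (q : Q) (a : A),
      adj.counit.app (ModuleCat.of A A) (Bal.tmul B p (Bal.tmul A q a))
        = ν (Bal.tmul B p (op a • q)))
    (M : ModuleCat.{u} A) (p : P) (q : Q) (m : M) :
    adj.counit.app M (Bal.tmul B p (Bal.tmul A q m)) = ν (Bal.tmul B p q) • m := by
  have h := NatTrans.app_map_toSpanSingleton adj.counit M m
    (Bal.tmul B p (Bal.tmul A q (1 : A)))
  rw [hcounit, op_one, one_smul] at h
  refine Eq.trans ?_ h
  congr 1
  show Bal.tmul B p (Bal.tmul A q m) = Bal.tmul B p (Bal.tmul A q ((1 : A) • m))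
  rw [one_smul]

theorem sum_smul_eq_of_unit_app_one_eq
    (hcounit : ∀ (p : P) (q : Q) (a : A),
      adj.counit.app (ModuleCat.of A A) (Bal.tmul B p (Bal.tmul A q a))
        = ν (Bal.tmul B p (op a • q)))
    {n : ℕ} {q' : Fin n → Q} {p' : Fin n → P}
    (hunit : adj.unit.app (ModuleCat.of B B) (1 : B)
      = ∑ i, Bal.tmul A (q' i) (Bal.tmul B (p' i) (1 : B)))
    (p : P) : ∑ i, ν (Bal.tmul B p (q' i)) • p' i = p := by
  have htri : adj.counit.app ((tensorFunctor B A P).obj (ModuleCat.of B B))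
      (Bal.tmul B p (adj.unit.app (ModuleCat.of B B) (1 : B))) = Bal.tmul B p (1 : B) :=
    ConcreteCategory.congr_hom (adj.left_triangle_components (ModuleCat.of B B))
      (Bal.tmul B p (1 : B))
  -- `erw`: the instances on the carrier of a `ModuleCat` object agree with those of `Bal`
  -- only up to unfolding.
  erw [hunit, Bal.tmul_sum, map_sum,
    Finset.sum_congr rfl fun i _ => counit_app_tmul_tmul hcounit _ p (q' i) _] at htri
  have h := congrArg (Bal.contractRight B) htri
  erw [map_sum, Bal.contractRight_tmul, op_one, one_smul] at h
  refine Eq.trans (Finset.sum_congr rfl fun i _ => ?_) h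
  erw [Bal.lsmul_tmul, Bal.contractRight_tmul, op_one, one_smul]

theorem sum_op_smul_eq_of_unit_app_one_eq
    (hcounit : ∀ (p : P) (q : Q) (a : A),
      adj.counit.app (ModuleCat.of A A) (Bal.tmul B p (Bal.tmul A q a))
        = ν (Bal.tmul B p (op a • q)))
    {n : ℕ} {q' : Fin n → Q} {p' : Fin n → P}
    (hunit : adj.unit.app (ModuleCat.of B B) (1 : B)
      = ∑ i, Bal.tmul A (q' i) (Bal.tmul B (p' i) (1 : B)))
    (q : Q) : ∑ i, op (ν (Bal.tmul B (p' i) q)) • q' i = q := by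
  let G := tensorFunctor A B Q
  let g := ModuleCat.ofHom
    (LinearMap.toSpanSingleton B (G.obj (ModuleCat.of A A)) (Bal.tmul A q (1 : A)))
  have hg : g (1 : B) = Bal.tmul A q (1 : A) := one_smul B _
  have hterm : ∀ i, G.map (adj.counit.app (ModuleCat.of A A))
      ((tensorFunctor B A P ⋙ G).map g (Bal.tmul A (q' i) (Bal.tmul B (p' i) (1 : B))))
        = Bal.tmul A (q' i) (ν (Bal.tmul B (p' i) q)) := fun i => by
    show Bal.tmul A (q' i) (adj.counit.app _ (Bal.tmul B (p' i) (g (1 : B)))) = _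
    rw [hg, hcounit, op_one, one_smul]
  have htri : G.map (adj.counit.app (ModuleCat.of A A))
      (adj.unit.app (G.obj (ModuleCat.of A A)) (Bal.tmul A q (1 : A))) = Bal.tmul A q (1 : A) :=
    ConcreteCategory.congr_hom (adj.right_triangle_components (ModuleCat.of A A))
      (Bal.tmul A q (1 : A))
  erw [NatTrans.app_eq_map_toSpanSingleton adj.unit, hunit, map_sum, map_sum,
    Finset.sum_congr rfl fun i _ => hterm i] at htri
  have h := congrArg (Bal.contractRight A) htri
  erw [map_sum, Bal.contractRight_tmul, op_one, one_smul] at h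
  simpa only [Bal.contractRight_tmul] using h

end Adjunction

theorem adjunction_element_of_adjunction_general
    {A B P Q : Type u} [Ring A] [Ring B]
    [AddCommGroup P] [Module A P] [Module Bᵐᵒᵖ P] [SMulCommClass A Bᵐᵒᵖ P]
    [AddCommGroup Q] [Module B Q] [Module Aᵐᵒᵖ Q] [SMulCommClass B Aᵐᵒᵖ Q]
    (ν : Bal B P Q →+ A)
    (adj : tensorFunctor B A P ⊣ tensorFunctor A B Q)
    (hcounit : ∀ (p : P) (q : Q) (a : A),
      adj.counit.app (ModuleCat.of A A) (Bal.tmul B p (Bal.tmul A q a))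
        = ν (Bal.tmul B p (op a • q))) :
    ∃ (n : ℕ) (q' : Fin n → Q) (p' : Fin n → P),
      (∀ p : P, ∑ i, ν (Bal.tmul B p (q' i)) • p' i = p) ∧
      (∀ q : Q, ∑ i, op (ν (Bal.tmul B (p' i) q)) • q' i = q) := by
  obtain ⟨n, q', p', hunit⟩ :=
    Bal.exists_eq_sum_tmul_tmul_one B (adj.unit.app (ModuleCat.of B B) (1 : B))
  exact ⟨n, q', p', sum_smul_eq_of_unit_app_one_eq hcounit hunit,
    sum_op_smul_eq_of_unit_app_one_eq hcounit hunit⟩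

/-- If the functor `P ⊗[B] - : B-Mod ⥤ A-Mod` is left adjoint to
`Q ⊗[A] - : A-Mod ⥤ B-Mod` with counit of adjunction at `A` given by `ν` (under the
identification `Q ⊗[A] A ≅ Q`), then there is an adjunction element
`Σᵢ q'ᵢ ⊗ p'ᵢ ∈ Q ⊗[A] P` satisfying the two triangular identities. -/
theorem adjunction_element_of_adjunction
    {A B P Q : Type u} [Ring A] [Ring B]
    [AddCommGroup P] [Module A P] [Module Bᵐᵒᵖ P] [SMulCommClass A Bᵐᵒᵖ P]
    [AddCommGroup Q] [Module B Q] [Module Aᵐᵒᵖ Q] [SMulCommClass B Aᵐᵒᵖ Q]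
    (ν : Bal B P Q →+ A)
    (hνl : ∀ (a : A) (x : Bal B P Q), ν (a • x) = a * ν x)
    (hνr : ∀ (a : A) (x : Bal B P Q), ν (op a • x) = ν x * a)
    (adj : tensorFunctor B A P ⊣ tensorFunctor A B Q)
    (hcounit : ∀ (p : P) (q : Q) (a : A),
      adj.counit.app (ModuleCat.of A A) (Bal.tmul B p (Bal.tmul A q a))
        = ν (Bal.tmul B p (op a • q))) :
    ∃ (n : ℕ) (q' : Fin n → Q) (p' : Fin n → P),
      (∀ p : P, ∑ i, ν (Bal.tmul B p (q' i)) • p' i = p) ∧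
      (∀ q : Q, ∑ i, op (ν (Bal.tmul B (p' i) q)) • q' i = q) :=
  adjunction_element_of_adjunction_general ν adj hcounit
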